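/- Let G be a strongly connected digraph on n vertices with arc connectivity κ'(G) = k ≥ 1, and suppose G contains a vertex of indegree k. Then for 0 ≤ α < 1, μ_α(G) ≥ μ_α(K(n,k,1)), with equality if and only if G ≅ K(n,k,1). -/

import Mathlib

open Matrix BigOperators

/-- Spectral radius of a real square matrix: the largest modulus of its complex eigenvalues. -/
noncomputable def specRad {n : ℕ} (M : Matrix (Fin n) (Fin n) ℝ) : ℝ :=
  sSup {r : ℝ | ∃ μ ∈ spectrum ℂ (M.map (fun x => (x : ℂ))), r = ‖μ‖}

/-- A matrix is irreducible iff its associated digraph is strongly connected. -/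
def Irred {n : ℕ} (M : Matrix (Fin n) (Fin n) ℝ) : Prop :=
  ∀ i j : Fin n, Relation.ReflTransGen (fun a b => M a b ≠ 0) i j

/-- A directed walk of length `k` from `i` to `j` in a digraph. -/
def DWalk {n : ℕ} (G : Digraph (Fin n)) (i j : Fin n) (k : ℕ) : Prop :=
  ∃ f : ℕ → Fin n, f 0 = i ∧ f k = j ∧ ∀ l < k, G.Adj (f l) (f (l + 1))

/-- A digraph is strongly connected iff every vertex can reach every vertex. -/
def SConn {n : ℕ} (G : Digraph (Fin n)) : Prop :=
  ∀ i j : Fin n, ∃ k : ℕ, DWalk G i j k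

/-- A simple digraph has no loops. -/
def Loopless {n : ℕ} (G : Digraph (Fin n)) : Prop := ∀ i : Fin n, ¬ G.Adj i i

/-- Directed distance from `i` to `j`. -/
noncomputable def ddist {n : ℕ} (G : Digraph (Fin n)) (i j : Fin n) : ℕ :=
  sInf {k : ℕ | DWalk G i j k}

/-- Transmission of vertex `i`: sum of distances from `i` to all vertices. -/
noncomputable def transm {n : ℕ} (G : Digraph (Fin n)) (i : Fin n) : ℝ :=
  ∑ j : Fin n, (ddist G i j : ℝ)

/-- The generalized distance matrix `D_α(G) = α·Diag(Tr) + (1-α)·D(G)`. -/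
noncomputable def Dalpha {n : ℕ} (α : ℝ) (G : Digraph (Fin n)) : Matrix (Fin n) (Fin n) ℝ :=
  α • Matrix.diagonal (transm G) + (1 - α) • (Matrix.of fun i j => (ddist G i j : ℝ))

/-- The `D_α` spectral radius of a digraph. -/
noncomputable def mualpha {n : ℕ} (α : ℝ) (G : Digraph (Fin n)) : ℝ :=
  specRad (Dalpha α G)

/-- Isomorphism of digraphs on `Fin n`. -/
def IsoD {n : ℕ} (G H : Digraph (Fin n)) : Prop :=
  ∃ e : Fin n ≃ Fin n, ∀ i j : Fin n, G.Adj i j ↔ H.Adj (e i) (e j)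

/-- The digraph `K(n,k,m)`: vertices `0..k-1` form `K↔ₖ`, `k..k+m-1` form `K↔ₘ`,
`k+m..n-1` form `K↔_{n-k-m}`; all arcs present except those from `K↔_{n-k-m}` to `K↔ₘ`. -/
def KD (n k m : ℕ) : Digraph (Fin n) :=
  ⟨fun i j => i ≠ j ∧ ¬(k + m ≤ (i : ℕ) ∧ k ≤ (j : ℕ) ∧ (j : ℕ) < k + m)⟩

/-- A directed walk staying inside a vertex set `A`. -/
def DWalkIn {n : ℕ} (G : Digraph (Fin n)) (A : Set (Fin n)) (i j : Fin n) (k : ℕ) : Prop :=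
  ∃ f : ℕ → Fin n, f 0 = i ∧ f k = j ∧ (∀ l ≤ k, f l ∈ A) ∧ ∀ l < k, G.Adj (f l) (f (l + 1))

/-- The induced subdigraph on `A` is strongly connected. -/
def SCOn {n : ℕ} (G : Digraph (Fin n)) (A : Set (Fin n)) : Prop :=
  ∀ i ∈ A, ∀ j ∈ A, ∃ k : ℕ, DWalkIn G A i j k

/-!
Relabel the vertices so that the vertex `w` of indegree `k` becomes `k` and its in-neighbours
become `0, …, k - 1`. The only arcs missing from `K(n,k,1)` enter `k` from outside `0, …, k - 1`,
so after relabelling `G` is a spanning subdigraph of `K(n,k,1)`. Extra arcs only shorten distances,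
hence `D_α(K(n,k,1)) ≤ D_α(G)` entrywise, and by Gelfand's formula the spectral radius is monotone
on entrywise nonnegative matrices. If `G` lacks an arc of `K(n,k,1)`, an off-diagonal entry drops
strictly, and positivity of the off-diagonal entries of `D_α(K(n,k,1))` makes the drop of the
spectral radius strict.
-/

open scoped ENNReal

section SpectralRadius

variable {A : Type*} [NormedRing A] [NormedAlgebra ℂ A]

lemma spectralRadius_pow_eq [Nontrivial A] (a : A) (m : ℕ) :
    spectralRadius ℂ (a ^ m) = spectralRadius ℂ a ^ m := by
  rcases eq_or_ne m 0 with rfl | hm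
  · simp
  rw [spectralRadius, spectrum.map_pow_of_pos a (Nat.pos_of_ne_zero hm), iSup_image,
    spectralRadius, ENNReal.iSup₂_pow_of_ne_zero _ hm]
  simp [nnnorm_pow]

variable [CompleteSpace A]

lemma spectralRadius_smul_eq [Nontrivial A] (c : ℂ) (a : A) :
    spectralRadius ℂ (c • a) = ‖c‖₊ * spectralRadius ℂ a := by
  rw [spectralRadius, spectrum.smul_eq_smul c a (spectrum.nonempty a), ← Set.image_smul,
    iSup_image, spectralRadius, ENNReal.mul_iSup]
  refine iSup_congr fun k => ?_
  rw [ENNReal.mul_iSup]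
  simp

lemma spectralRadius_le_of_forall_nnnorm_pow_le {a b : A} (h : ∀ m : ℕ, ‖a ^ m‖₊ ≤ ‖b ^ m‖₊) :
    spectralRadius ℂ a ≤ spectralRadius ℂ b :=
  le_of_tendsto_of_tendsto' (spectrum.pow_nnnorm_pow_one_div_tendsto_nhds_spectralRadius a)
    (spectrum.pow_nnnorm_pow_one_div_tendsto_nhds_spectralRadius b)
    fun m => ENNReal.rpow_le_rpow (ENNReal.coe_le_coe.2 (h m)) (by positivity)

end SpectralRadius

namespace Matrix

variable {ι α : Type*} [Fintype ι] [Semiring α] [PartialOrder α] {X Y X' Y' : Matrix ι ι α}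

lemma mul_apply_nonneg [IsOrderedRing α] (hX : ∀ i j, 0 ≤ X i j) (hY : ∀ i j, 0 ≤ Y i j)
    (i j : ι) : 0 ≤ (X * Y) i j :=
  Finset.sum_nonneg fun l _ => mul_nonneg (hX i l) (hY l j)

lemma mul_apply_pos [Nonempty ι] [IsStrictOrderedRing α] (hX : ∀ i j, 0 < X i j)
    (hY : ∀ i j, 0 < Y i j) (i j : ι) : 0 < (X * Y) i j :=
  Finset.sum_pos (fun l _ => mul_pos (hX i l) (hY l j)) Finset.univ_nonempty

lemma mul_apply_le_mul_apply [IsOrderedRing α] (hX : ∀ i j, 0 ≤ X i j) (hY : ∀ i j, 0 ≤ Y i j)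
    (hXX' : ∀ i j, X i j ≤ X' i j) (hYY' : ∀ i j, Y i j ≤ Y' i j) (i j : ι) :
    (X * Y) i j ≤ (X' * Y') i j :=
  Finset.sum_le_sum fun l _ => mul_le_mul (hXX' i l) (hYY' l j) (hY l j) ((hX i l).trans (hXX' i l))

lemma mul_apply_lt_mul_apply [IsStrictOrderedRing α] (hX : ∀ i j, 0 ≤ X i j)
    (hY : ∀ i j, 0 ≤ Y i j) (hXX' : ∀ i j, X i j ≤ X' i j) (hYY' : ∀ i j, Y i j ≤ Y' i j)
    {i j : ι} (l : ι) (hl : X i l * Y l j < X' i l * Y' l j) : (X * Y) i j < (X' * Y') i j :=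
  Finset.sum_lt_sum
    (fun l _ => mul_le_mul (hXX' i l) (hYY' l j) (hY l j) ((hX i l).trans (hXX' i l)))
    ⟨l, Finset.mem_univ l, hl⟩

lemma pow_apply_le_pow_apply [DecidableEq ι] [IsOrderedRing α] (hX : ∀ i j, 0 ≤ X i j)
    (hXY : ∀ i j, X i j ≤ Y i j) (m : ℕ) (i j : ι) : (X ^ m) i j ≤ (Y ^ m) i j := by
  induction m generalizing i j with
  | zero => rfl
  | succ m ih =>
    rw [pow_succ, pow_succ]
    exact mul_apply_le_mul_apply (pow_apply_nonneg hX m) hX ih hXY i j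

end Matrix

section SpecRad

attribute [local instance] Matrix.linftyOpNormedRing Matrix.linftyOpNormedAlgebra

variable {n : ℕ} {X Y : Matrix (Fin n) (Fin n) ℝ}

lemma map_ofReal_pow (M : Matrix (Fin n) (Fin n) ℝ) (m : ℕ) :
    (M ^ m).map ((↑) : ℝ → ℂ) = M.map ((↑) : ℝ → ℂ) ^ m :=
  M.map_pow Complex.ofRealHom m

lemma nnnorm_map_ofReal_le (h : ∀ i j, |X i j| ≤ Y i j) :
    ‖X.map ((↑) : ℝ → ℂ)‖₊ ≤ ‖Y.map ((↑) : ℝ → ℂ)‖₊ := by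
  rw [Matrix.linfty_opNNNorm_def, Matrix.linfty_opNNNorm_def]
  refine Finset.sup_mono_fun fun i _ => Finset.sum_le_sum fun j _ => ?_
  rw [← NNReal.coe_le_coe]
  simpa using (h i j).trans (le_abs_self _)

lemma specRad_submatrix_equiv (M : Matrix (Fin n) (Fin n) ℝ) (e : Fin n ≃ Fin n) :
    specRad (M.submatrix e e) = specRad M := by
  have h := AlgEquiv.spectrum_eq (Matrix.reindexAlgEquiv ℂ ℂ e.symm) (M.map ((↑) : ℝ → ℂ))
  simp only [Matrix.coe_reindexAlgEquiv, Matrix.reindex_apply, Equiv.symm_symm] at h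
  rw [specRad, specRad, ← h]
  rfl

variable [NeZero n]

lemma specRad_eq_toReal_spectralRadius (M : Matrix (Fin n) (Fin n) ℝ) :
    specRad M = (spectralRadius ℂ (M.map ((↑) : ℝ → ℂ))).toReal := by
  obtain ⟨k, hk, hρ⟩ := spectrum.exists_nnnorm_eq_spectralRadius_of_nonempty
    (spectrum.nonempty (M.map ((↑) : ℝ → ℂ)))
  have hmax : IsGreatest {r : ℝ | ∃ μ ∈ spectrum ℂ (M.map ((↑) : ℝ → ℂ)), r = ‖μ‖} ‖k‖ := by
    refine ⟨⟨k, hk, rfl⟩, ?_⟩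
    rintro _ ⟨μ, hμ, rfl⟩
    have : (‖μ‖₊ : ℝ≥0∞) ≤ ‖k‖₊ :=
      hρ ▸ le_iSup₂ (f := fun μ (_ : μ ∈ spectrum ℂ _) => (‖μ‖₊ : ℝ≥0∞)) μ hμ
    exact_mod_cast this
  rw [specRad, hmax.csSup_eq, ← hρ]
  rfl

lemma specRad_nonneg (M : Matrix (Fin n) (Fin n) ℝ) : 0 ≤ specRad M := by
  rw [specRad_eq_toReal_spectralRadius]
  exact ENNReal.toReal_nonneg

lemma specRad_pow (M : Matrix (Fin n) (Fin n) ℝ) (m : ℕ) : specRad (M ^ m) = specRad M ^ m := by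
  rw [specRad_eq_toReal_spectralRadius, specRad_eq_toReal_spectralRadius, ← ENNReal.toReal_pow,
    ← spectralRadius_pow_eq, map_ofReal_pow]

lemma specRad_one : specRad (1 : Matrix (Fin n) (Fin n) ℝ) = 1 := by
  simpa using specRad_pow (1 : Matrix (Fin n) (Fin n) ℝ) 0

lemma specRad_smul {c : ℝ} (hc : 0 ≤ c) (M : Matrix (Fin n) (Fin n) ℝ) :
    specRad (c • M) = c * specRad M := by
  have h : (c • M).map ((↑) : ℝ → ℂ) = (c : ℂ) • M.map ((↑) : ℝ → ℂ) := by
    ext i j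
    simp
  rw [specRad_eq_toReal_spectralRadius, specRad_eq_toReal_spectralRadius, h,
    spectralRadius_smul_eq, ENNReal.toReal_mul]
  simp [abs_of_nonneg hc]

lemma specRad_mono (hX : ∀ i j, 0 ≤ X i j) (hXY : ∀ i j, X i j ≤ Y i j) :
    specRad X ≤ specRad Y := by
  rw [specRad_eq_toReal_spectralRadius, specRad_eq_toReal_spectralRadius]
  refine ENNReal.toReal_mono (ne_top_of_le_ne_top ENNReal.coe_ne_top
    (spectrum.spectralRadius_le_nnnorm _)) (spectralRadius_le_of_forall_nnnorm_pow_le fun m => ?_)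
  rw [← map_ofReal_pow, ← map_ofReal_pow]
  refine nnnorm_map_ofReal_le fun i j => ?_
  rw [abs_of_nonneg (Matrix.pow_apply_nonneg hX m i j)]
  exact Matrix.pow_apply_le_pow_apply hX hXY m i j

lemma specRad_pos (hX : ∀ i j, 0 < X i j) : 0 < specRad X := by
  obtain ⟨l, -, hl⟩ := Finset.exists_min_image Finset.univ (fun i => X i i) Finset.univ_nonempty
  set D : Matrix (Fin n) (Fin n) ℝ := X l l • 1
  have hD : ∀ i j, 0 ≤ D i j := fun i j => by
    by_cases h : i = j <;> simp [D, h, (hX l l).le]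
  have hDX : ∀ i j, D i j ≤ X i j := fun i j => by
    by_cases h : i = j
    · subst h
      simpa [D] using hl i (Finset.mem_univ i)
    · simpa [D, h] using (hX i j).le
  calc 0 < X l l := hX l l
    _ = specRad D := by rw [specRad_smul (hX l l).le, specRad_one, mul_one]
    _ ≤ specRad X := specRad_mono hD hDX

lemma specRad_lt_of_forall_lt (hX : ∀ i j, 0 < X i j) (hXY : ∀ i j, X i j < Y i j) :
    specRad X < specRad Y := by
  obtain ⟨p, -, hp⟩ := Finset.exists_min_image Finset.univ
    (fun p : Fin n × Fin n => Y p.1 p.2 / X p.1 p.2) Finset.univ_nonempty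
  set c := Y p.1 p.2 / X p.1 p.2
  have hc : 1 < c := (one_lt_div (hX _ _)).2 (hXY _ _)
  have hcX : ∀ i j, 0 ≤ (c • X) i j := fun i j => by
    simpa using (mul_pos (by positivity) (hX i j)).le
  have hcXY : ∀ i j, (c • X) i j ≤ Y i j := fun i j =>
    (le_div_iff₀ (hX i j)).1 (hp (i, j) (Finset.mem_univ _))
  calc specRad X < c * specRad X := lt_mul_of_one_lt_left (specRad_pos hX) hc
    _ = specRad (c • X) := (specRad_smul (by positivity) X).symm
    _ ≤ specRad Y := specRad_mono hcX hcXY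

end SpecRad

section SpecRadStrict

variable {n : ℕ} {A B : Matrix (Fin n) (Fin n) ℝ}

lemma mul_self_apply_pos (hn : 2 < n) (hB : ∀ i j, 0 ≤ B i j)
    (hBpos : ∀ i j, i ≠ j → 0 < B i j) (i j : Fin n) : 0 < (B * B) i j := by
  obtain ⟨l, hli, hlj⟩ := Fin.exists_ne_and_ne_of_two_lt i j hn
  exact Finset.sum_pos' (fun l _ => mul_nonneg (hB i l) (hB l j))
    ⟨l, Finset.mem_univ l, mul_pos (hBpos i l hli.symm) (hBpos l j hlj)⟩

/-- Since `n ≥ 3`, `B * B` is entrywise positive, so `(A * A) ^ 3` dominates `(B * B) ^ 3` strictly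
in every entry as soon as `A` dominates `B` strictly in one. -/
lemma specRad_lt_of_offDiag_pos (hn : 2 < n) (hB : ∀ i j, 0 ≤ B i j)
    (hBpos : ∀ i j, i ≠ j → 0 < B i j) (hBA : ∀ i j, B i j ≤ A i j) {a b : Fin n} (hab : a ≠ b)
    (hlt : B a b < A a b) : specRad B < specRad A := by
  have : NeZero n := ⟨by omega⟩
  have hA : ∀ i j, 0 ≤ A i j := fun i j => (hB i j).trans (hBA i j)
  have hP : ∀ i j, 0 < (B * B) i j := mul_self_apply_pos hn hB hBpos
  have hP0 : ∀ i j, 0 ≤ (B * B) i j := fun i j => (hP i j).le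
  have hPQ : ∀ i j, (B * B) i j ≤ (A * A) i j := Matrix.mul_apply_le_mul_apply hB hB hBA hBA
  have hPP0 := Matrix.mul_apply_nonneg hP0 hP0
  have hPP : ∀ i j, (B * B * (B * B)) i j ≤ (A * A * (A * A)) i j :=
    Matrix.mul_apply_le_mul_apply hP0 hP0 hPQ hPQ
  have hPQ_aa : (B * B) a a < (A * A) a a :=
    Matrix.mul_apply_lt_mul_apply hB hB hBA hBA b
      (mul_lt_mul hlt (hBA b a) (hBpos b a hab.symm) (hA a b))
  have hPQ_ia : ∀ i, (B * B * (B * B)) i a < (A * A * (A * A)) i a := fun i =>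
    Matrix.mul_apply_lt_mul_apply hP0 hP0 hPQ hPQ a
      (mul_lt_mul' (hPQ i a) hPQ_aa (hP0 a a) ((hP i a).trans_le (hPQ i a)))
  have hPQ3 : ∀ i j, (B * B * (B * B) * (B * B)) i j < (A * A * (A * A) * (A * A)) i j :=
    fun i j => Matrix.mul_apply_lt_mul_apply hPP0 hP0 hPP hPQ a
      (mul_lt_mul (hPQ_ia i) (hPQ a j) (hP a j) ((hPP0 i a).trans (hPP i a)))
  have h6 : specRad B ^ 6 < specRad A ^ 6 := by
    have h := specRad_lt_of_forall_lt (Matrix.mul_apply_pos (Matrix.mul_apply_pos hP hP) hP) hPQ3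
    rwa [← pow_three', ← pow_three', ← sq, ← sq, ← pow_mul, ← pow_mul, specRad_pow,
      specRad_pow] at h
  exact lt_of_pow_lt_pow_left₀ 6 (specRad_nonneg A) h6

end SpecRadStrict

section Distance

variable {n : ℕ} {G H : Digraph (Fin n)} {i j : Fin n} {m : ℕ}

lemma dWalk_zero (G : Digraph (Fin n)) (i : Fin n) : DWalk G i i 0 :=
  ⟨fun _ => i, rfl, rfl, fun _ hl => absurd hl (Nat.not_lt_zero _)⟩

lemma DWalk.eq_of_zero (h : DWalk G i j 0) : i = j := by
  obtain ⟨f, rfl, rfl, -⟩ := h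
  rfl

lemma dWalk_one_iff : DWalk G i j 1 ↔ G.Adj i j := by
  refine ⟨fun ⟨f, h0, h1, hf⟩ => h0 ▸ h1 ▸ hf 0 one_pos, fun h => ?_⟩
  refine ⟨fun l => if l = 0 then i else j, rfl, rfl, fun l hl => ?_⟩
  obtain rfl : l = 0 := by omega
  simpa using h

lemma DWalk.map (e : Fin n → Fin n) (he : ∀ a b, G.Adj a b → H.Adj (e a) (e b))
    (h : DWalk G i j m) : DWalk H (e i) (e j) m := by
  obtain ⟨f, rfl, rfl, hf⟩ := h
  exact ⟨e ∘ f, rfl, rfl, fun l hl => he _ _ (hf l hl)⟩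

lemma ddist_le (h : DWalk G i j m) : ddist G i j ≤ m :=
  Nat.sInf_le h

lemma dWalk_ddist (h : ∃ m, DWalk G i j m) : DWalk G i j (ddist G i j) :=
  Nat.sInf_mem h

lemma ddist_self (G : Digraph (Fin n)) (i : Fin n) : ddist G i i = 0 :=
  Nat.le_zero.mp (ddist_le (dWalk_zero G i))

lemma ddist_pos (hij : i ≠ j) (h : ∃ m, DWalk G i j m) : 0 < ddist G i j :=
  Nat.pos_of_ne_zero fun h0 => hij (h0 ▸ dWalk_ddist h).eq_of_zero

lemma ddist_eq_one_iff (hij : i ≠ j) (h : ∃ m, DWalk G i j m) : ddist G i j = 1 ↔ G.Adj i j := by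
  refine ⟨fun h1 => dWalk_one_iff.1 (h1 ▸ dWalk_ddist h), fun hadj => ?_⟩
  have := ddist_le (dWalk_one_iff.2 hadj)
  have := ddist_pos hij h
  omega

lemma ddist_map_le (e : Fin n → Fin n) (he : ∀ a b, G.Adj a b → H.Adj (e a) (e b))
    (h : ∃ m, DWalk G i j m) : ddist H (e i) (e j) ≤ ddist G i j :=
  ddist_le ((dWalk_ddist h).map e he)

lemma ddist_map_eq (e : Fin n ≃ Fin n) (he : ∀ a b, G.Adj a b ↔ H.Adj (e a) (e b)) :
    ddist H (e i) (e j) = ddist G i j := by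
  have hinv : ∀ a b, H.Adj a b → G.Adj (e.symm a) (e.symm b) := fun a b h =>
    (he _ _).2 (by simpa using h)
  refine congrArg sInf (Set.ext fun m => ⟨fun h => ?_, fun h => h.map e fun a b => (he a b).1⟩)
  simpa using h.map e.symm hinv

end Distance

section DistanceMatrix

variable {n : ℕ} {G H : Digraph (Fin n)} {α : ℝ}

lemma Dalpha_apply_self (α : ℝ) (G : Digraph (Fin n)) (i : Fin n) :
    Dalpha α G i i = α * transm G i := by
  simp [Dalpha, ddist_self]

lemma Dalpha_apply_of_ne (α : ℝ) (G : Digraph (Fin n)) {i j : Fin n} (hij : i ≠ j) :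
    Dalpha α G i j = (1 - α) * ddist G i j := by
  simp [Dalpha, hij]

lemma Dalpha_nonneg (h0 : 0 ≤ α) (h1 : α ≤ 1) (G : Digraph (Fin n)) (i j : Fin n) :
    0 ≤ Dalpha α G i j := by
  rcases eq_or_ne i j with rfl | hij
  · rw [Dalpha_apply_self]
    exact mul_nonneg h0 (Finset.sum_nonneg fun _ _ => Nat.cast_nonneg _)
  · rw [Dalpha_apply_of_ne α G hij]
    exact mul_nonneg (by linarith) (Nat.cast_nonneg _)

lemma Dalpha_pos_of_ne (h1 : α < 1) (hG : SConn G) {i j : Fin n} (hij : i ≠ j) :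
    0 < Dalpha α G i j := by
  rw [Dalpha_apply_of_ne α G hij]
  exact mul_pos (by linarith) (by exact_mod_cast ddist_pos hij (hG i j))

variable (e : Fin n ≃ Fin n)

lemma transm_map_le (he : ∀ a b, G.Adj a b → H.Adj (e a) (e b)) (hG : SConn G) (i : Fin n) :
    transm H (e i) ≤ transm G i := by
  rw [transm, ← e.sum_comp]
  exact Finset.sum_le_sum fun j _ => by exact_mod_cast ddist_map_le e he (hG i j)

lemma Dalpha_map_le (h0 : 0 ≤ α) (h1 : α ≤ 1) (he : ∀ a b, G.Adj a b → H.Adj (e a) (e b))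
    (hG : SConn G) (i j : Fin n) : Dalpha α H (e i) (e j) ≤ Dalpha α G i j := by
  rcases eq_or_ne i j with rfl | hij
  · rw [Dalpha_apply_self, Dalpha_apply_self]
    exact mul_le_mul_of_nonneg_left (transm_map_le e he hG i) h0
  · rw [Dalpha_apply_of_ne α G hij, Dalpha_apply_of_ne α H (e.injective.ne hij)]
    exact mul_le_mul_of_nonneg_left (by exact_mod_cast ddist_map_le e he (hG i j)) (by linarith)

lemma Dalpha_submatrix_eq_of_adj_iff (he : ∀ a b, G.Adj a b ↔ H.Adj (e a) (e b)) :
    (Dalpha α H).submatrix e e = Dalpha α G := by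
  ext i j
  rcases eq_or_ne i j with rfl | hij
  · rw [Matrix.submatrix_apply, Dalpha_apply_self, Dalpha_apply_self, transm, transm,
      ← e.sum_comp]
    simp only [ddist_map_eq e he]
  · rw [Matrix.submatrix_apply, Dalpha_apply_of_ne α G hij,
      Dalpha_apply_of_ne α H (e.injective.ne hij), ddist_map_eq e he]

lemma mualpha_le_of_adj_map [NeZero n] (h0 : 0 ≤ α) (h1 : α ≤ 1)
    (he : ∀ a b, G.Adj a b → H.Adj (e a) (e b)) (hG : SConn G) : mualpha α H ≤ mualpha α G := by
  rw [mualpha, mualpha, ← specRad_submatrix_equiv (Dalpha α H) e]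
  exact specRad_mono (fun i j => Dalpha_nonneg h0 h1 H _ _) (Dalpha_map_le e h0 h1 he hG)

lemma mualpha_lt_of_adj_map (hn : 2 < n) (h0 : 0 ≤ α) (h1 : α < 1)
    (he : ∀ a b, G.Adj a b → H.Adj (e a) (e b)) (hG : SConn G) (hH : SConn H) {a b : Fin n}
    (hab : a ≠ b) (hHab : H.Adj (e a) (e b)) (hGab : ¬ G.Adj a b) : mualpha α H < mualpha α G := by
  rw [mualpha, mualpha, ← specRad_submatrix_equiv (Dalpha α H) e]
  refine specRad_lt_of_offDiag_pos hn (fun i j => Dalpha_nonneg h0 h1.le H _ _)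
    (fun i j hij => Dalpha_pos_of_ne h1 hH (e.injective.ne hij)) (Dalpha_map_le e h0 h1.le he hG)
    hab ?_
  have hH1 : ddist H (e a) (e b) = 1 := (ddist_eq_one_iff (e.injective.ne hab) (hH _ _)).2 hHab
  have hG1 : 1 < ddist G a b := lt_of_le_of_ne (ddist_pos hab (hG a b))
    (fun h => hGab ((ddist_eq_one_iff hab (hG a b)).1 h.symm))
  rw [Matrix.submatrix_apply, Dalpha_apply_of_ne α H (e.injective.ne hab),
    Dalpha_apply_of_ne α G hab, hH1]
  exact mul_lt_mul_of_pos_left (by exact_mod_cast hG1) (by linarith)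

lemma mualpha_eq_of_isoD (h : IsoD G H) : mualpha α G = mualpha α H := by
  obtain ⟨e, he⟩ := h
  rw [mualpha, mualpha, ← Dalpha_submatrix_eq_of_adj_iff e he, specRad_submatrix_equiv]

end DistanceMatrix

section KD

variable {n k : ℕ}

lemma sConn_KD (hk : 1 ≤ k) : SConn (KD n k 1) := by
  intro i j
  by_cases hij : (KD n k 1).Adj i j
  · exact ⟨1, dWalk_one_iff.2 hij⟩
  rcases eq_or_ne i j with rfl | hne
  · exact ⟨0, dWalk_zero _ i⟩
  -- the only missing arcs end at `k`; they are bypassed through vertex `0`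
  obtain ⟨hi, hj, hj'⟩ : k + 1 ≤ (i : ℕ) ∧ k ≤ (j : ℕ) ∧ (j : ℕ) < k + 1 := by
    simpa [KD, hne] using hij
  have h0 : 0 < n := by omega
  have hi0 : (KD n k 1).Adj i ⟨0, h0⟩ := by
    simp only [KD, ne_eq, Fin.ext_iff]
    omega
  have h0j : (KD n k 1).Adj ⟨0, h0⟩ j := by
    simp only [KD, ne_eq, Fin.ext_iff]
    omega
  refine ⟨2, fun l => if l = 0 then i else if l = 1 then ⟨0, h0⟩ else j, rfl, rfl, fun l hl => ?_⟩
  interval_cases l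
  exacts [hi0, h0j]

lemma exists_perm_apply_eq_and_forall_lt (hk : k < n) {N : Finset (Fin n)} (hN : N.card = k)
    {w : Fin n} (hw : w ∉ N) :
    ∃ σ : Equiv.Perm (Fin n), σ w = ⟨k, hk⟩ ∧ ∀ a ∈ N, (σ a : ℕ) < k := by
  obtain ⟨τ, hτ⟩ := Equiv.Perm.exists_map_finset_eq N (Finset.Iio ⟨k, hk⟩) (by simp [hN])
  have hτN : ∀ a ∈ N, τ a < ⟨k, hk⟩ := fun a ha => by
    rw [← Finset.mem_Iio, ← hτ]
    simpa using ha
  refine ⟨τ.trans (Equiv.swap (τ w) ⟨k, hk⟩), by simp, fun a ha => ?_⟩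
  have hτw : τ a ≠ τ w := τ.injective.ne (ne_of_mem_of_not_mem ha hw)
  rw [Equiv.trans_apply, Equiv.swap_apply_of_ne_of_ne hτw (hτN a ha).ne]
  exact hτN a ha

lemma exists_perm_adj_KD (hk : k < n) {G : Digraph (Fin n)} (hG : Loopless G) {w : Fin n}
    (hw : Set.ncard {u | G.Adj u w} = k) :
    ∃ σ : Equiv.Perm (Fin n), ∀ a b, G.Adj a b → (KD n k 1).Adj (σ a) (σ b) := by
  classical
  have hN : (Finset.univ.filter (G.Adj · w)).card = k := by
    rw [← hw, ← Set.ncard_coe_finset]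
    simp
  obtain ⟨σ, hσw, hσN⟩ := exists_perm_apply_eq_and_forall_lt hk hN (w := w) (by simpa using hG w)
  refine ⟨σ, fun a b hab => ⟨σ.injective.ne fun h => hG a (h ▸ hab), fun ⟨_, hb, hb'⟩ => ?_⟩⟩
  obtain rfl : b = w := σ.injective (Fin.ext (by rw [hσw]; exact Nat.eq_of_le_of_lt_succ hb hb'))
  have := hσN a (by simpa using hab)
  omega

end KD

theorem stmt18_general {n k : ℕ} (hk : 1 ≤ k) (hkn : k + 2 ≤ n) (G : Digraph (Fin n))
    (hG : Loopless G) (hsc : SConn G)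
    (hw : ∃ w : Fin n, Set.ncard {u : Fin n | G.Adj u w} = k)
    (α : ℝ) (h0 : 0 ≤ α) (h1 : α < 1) :
    mualpha α (KD n k 1) ≤ mualpha α G ∧
    (mualpha α G = mualpha α (KD n k 1) ↔ IsoD G (KD n k 1)) := by
  have : NeZero n := ⟨by omega⟩
  obtain ⟨w, hw⟩ := hw
  obtain ⟨σ, hσ⟩ := exists_perm_adj_KD (by omega) hG hw
  refine ⟨mualpha_le_of_adj_map σ h0 h1.le hσ hsc, fun heq => ?_, mualpha_eq_of_isoD⟩
  by_contra hiso
  obtain ⟨a, b, hab, hGab⟩ : ∃ a b, (KD n k 1).Adj (σ a) (σ b) ∧ ¬ G.Adj a b := by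
    by_contra! h
    exact hiso ⟨σ, fun a b => ⟨hσ a b, h a b⟩⟩
  exact (mualpha_lt_of_adj_map σ (by omega) h0 h1 hσ hsc (sConn_KD hk)
    (ne_of_apply_ne σ hab.1) hab hGab).ne heq.symm

theorem stmt18 {n k : ℕ} (hk : 1 ≤ k) (hkn : k + 2 ≤ n) (G : Digraph (Fin n))
    (hG : Loopless G) (hsc : SConn G)
    (hcut : ∃ F : Finset (Fin n × Fin n), F.card = k ∧
      ¬ SConn (Digraph.mk (fun i j => G.Adj i j ∧ (i, j) ∉ F)))
    (hmin : ∀ F : Finset (Fin n × Fin n), F.card < k →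
      SConn (Digraph.mk (fun i j => G.Adj i j ∧ (i, j) ∉ F)))
    (hw : ∃ w : Fin n, Set.ncard {u : Fin n | G.Adj u w} = k)
    (α : ℝ) (h0 : 0 ≤ α) (h1 : α < 1) :
    mualpha α (KD n k 1) ≤ mualpha α G ∧
    (mualpha α G = mualpha α (KD n k 1) ↔ IsoD G (KD n k 1)) :=
  stmt18_general hk hkn G hG hsc hw α h0 h1
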